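/- arXiv:1710.09572 — 4 statements merged into one kernel-verified Lean document; each statement's English description precedes it below -/
import Mathlib

section
/- For every positive integer M, the integral ∫₀^∞ x^(M-1) e^(-x) ln(x) / (M-1)! dx equals -γ + Σ_{k=1}^{M-1} 1/k, where γ is the Euler–Mascheroni constant. -/
open Real MeasureTheory
open scoped Nat

/-! The integral is `Γ'(M) / Γ(M)`: differentiating `Γ(s) = ∫₀^∞ t^(s-1) e^(-t) dt` under the
integral sign brings down a factor `log t`, while `Γ'(n + 1) = n! (-γ + H_n)` is known from the
digamma recursion `ψ(s + 1) = ψ(s) + 1/s` and `ψ(1) = -γ`. -/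

theorem Complex.hasDerivAt_Gamma_of_re_pos {s : ℂ} (hs : 0 < s.re) :
    HasDerivAt Gamma (∫ t : ℝ in Set.Ioi 0, (t : ℂ) ^ (s - 1) * (Real.log t * Real.exp (-t))) s :=
  (hasDerivAt_GammaIntegral hs).congr_of_eventuallyEq <| by
    filter_upwards [(continuous_re.isOpen_preimage _ isOpen_Ioi).mem_nhds hs] with z hz
    exact Gamma_eq_integral hz

theorem ofReal_integral_pow_mul_exp_neg_mul_log (n : ℕ) :
    ((∫ t in Set.Ioi (0 : ℝ), t ^ n * Real.exp (-t) * Real.log t : ℝ) : ℂ) =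
      ∫ t : ℝ in Set.Ioi 0, (t : ℂ) ^ ((n + 1 : ℂ) - 1) * (Real.log t * Real.exp (-t)) := by
  rw [← integral_complex_ofReal]
  refine setIntegral_congr_fun measurableSet_Ioi fun t _ => ?_
  simp only [add_sub_cancel_right, Complex.cpow_natCast]
  push_cast
  ring

theorem integral_pow_mul_exp_neg_mul_log (n : ℕ) :
    ∫ t in Set.Ioi (0 : ℝ), t ^ n * Real.exp (-t) * Real.log t =
      n ! * (-eulerMascheroniConstant + harmonic n) := by
  have hderiv := (Complex.hasDerivAt_Gamma_of_re_pos (s := n + 1) (by norm_cast; positivity)).unique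
    (Complex.hasDerivAt_Gamma_nat n)
  rw [← ofReal_integral_pow_mul_exp_neg_mul_log] at hderiv
  exact_mod_cast hderiv

theorem gamma_log_integral_general (M : ℕ) :
    ∫ x in Set.Ioi (0 : ℝ),
        x ^ (M - 1) * Real.exp (-x) * Real.log x / (Nat.factorial (M - 1)) =
      -Real.eulerMascheroniConstant + ∑ k ∈ Finset.Icc 1 (M - 1), (1 : ℝ) / k := by
  rw [integral_div, integral_pow_mul_exp_neg_mul_log, mul_div_cancel_left₀ _ (by positivity),
    harmonic_eq_sum_Icc]
  simp

/-- For every positive integer `M`,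
`∫₀^∞ x^(M-1) e^(-x) ln x / (M-1)! dx = -γ + ∑_{k=1}^{M-1} 1/k`. -/
theorem gamma_log_integral (M : ℕ) (hM : 0 < M) :
    ∫ x in Set.Ioi (0 : ℝ),
        x ^ (M - 1) * Real.exp (-x) * Real.log x / (Nat.factorial (M - 1)) =
      -Real.eulerMascheroniConstant + ∑ k ∈ Finset.Icc 1 (M - 1), (1 : ℝ) / k :=
  gamma_log_integral_general M
end

section
/- Let X ≥ 0 be an integrable real random variable. Then the function Γ(ρ) = ln(1 + ρ E[X]) - E[ln(1 + ρ X)] is monotonically nondecreasing in ρ on [0, ∞). -/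
open Real MeasureTheory Set

/-!
For `0 ≤ a ≤ b` the function `x ↦ log (1 + b x) - log (1 + a x)` is concave on `[0, ∞)`: its second
derivative is `(a / (1 + a x))² - (b / (1 + b x))² ≤ 0`. Jensen's inequality for it, applied to `X`,
is exactly `Γ(a) ≤ Γ(b)`.
-/

lemma hasDerivAt_log_one_add_mul {c x : ℝ} (h : 1 + c * x ≠ 0) :
    HasDerivAt (fun x => log (1 + c * x)) (c / (1 + c * x)) x := by
  simpa using (((hasDerivAt_id x).const_mul c).const_add 1).log h

lemma hasDerivAt_div_one_add_mul {c x : ℝ} (h : 1 + c * x ≠ 0) :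
    HasDerivAt (fun x => c / (1 + c * x)) (-(c / (1 + c * x)) ^ 2) x :=
  ((hasDerivAt_const x c).div (((hasDerivAt_id' x).const_mul c).const_add 1) h).congr_deriv
    (by rw [div_pow]; ring)

lemma continuousOn_log_one_add_mul {c : ℝ} (hc : 0 ≤ c) :
    ContinuousOn (fun x => log (1 + c * x)) (Ici 0) := fun x (hx : 0 ≤ x) =>
  (hasDerivAt_log_one_add_mul (by positivity)).continuousAt.continuousWithinAt

lemma div_one_add_mul_le_div_one_add_mul {a b x : ℝ} (ha : 0 ≤ a) (hab : a ≤ b) (hx : 0 ≤ x) :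
    a / (1 + a * x) ≤ b / (1 + b * x) := by
  have hb : 0 ≤ b := ha.trans hab
  rw [div_le_div_iff₀ (by positivity) (by positivity)]
  nlinarith

lemma concaveOn_log_one_add_mul_sub_log_one_add_mul {a b : ℝ} (ha : 0 ≤ a) (hab : a ≤ b) :
    ConcaveOn ℝ (Ici 0) (fun x => log (1 + b * x) - log (1 + a * x)) := by
  have hb : 0 ≤ b := ha.trans hab
  refine concaveOn_of_hasDerivWithinAt2_nonpos (convex_Ici 0)
    ((continuousOn_log_one_add_mul hb).sub (continuousOn_log_one_add_mul ha))
    (f' := fun x => b / (1 + b * x) - a / (1 + a * x))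
    (f'' := fun x => -(b / (1 + b * x)) ^ 2 - -(a / (1 + a * x)) ^ 2) ?_ ?_ ?_
  all_goals
    intro x hx
    rw [interior_Ici] at hx
    have hx : 0 ≤ x := le_of_lt hx
  · exact ((hasDerivAt_log_one_add_mul (by positivity)).sub
      (hasDerivAt_log_one_add_mul (by positivity))).hasDerivWithinAt
  · exact ((hasDerivAt_div_one_add_mul (by positivity)).sub
      (hasDerivAt_div_one_add_mul (by positivity))).hasDerivWithinAt
  · have := pow_le_pow_left₀ (by positivity) (div_one_add_mul_le_div_one_add_mul ha hab hx) 2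
    linarith

lemma integrable_log_one_add_mul {Ω : Type*} [MeasurableSpace Ω] {μ : Measure Ω} {X : Ω → ℝ}
    (hX : Integrable X μ) (hX0 : 0 ≤ᵐ[μ] X) {c : ℝ} (hc : 0 ≤ c) :
    Integrable (fun ω => log (1 + c * X ω)) μ := by
  have hmeas := measurable_log.comp_aemeasurable ((hX.aemeasurable.const_mul c).const_add 1)
  refine (hX.const_mul c).mono hmeas.aestronglyMeasurable ?_
  filter_upwards [hX0] with ω hω
  have hcX : 0 ≤ c * X ω := mul_nonneg hc hω
  rw [norm_of_nonneg (log_nonneg (by linarith)), norm_of_nonneg hcX]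
  linarith [log_le_sub_one_of_pos (x := 1 + c * X ω) (by linarith)]

/-- For a nonnegative integrable random variable `X` on a probability space, the gap
`ρ ↦ ln(1 + ρ E[X]) - E[ln(1 + ρ X)]` is monotonically nondecreasing on `[0, ∞)`. -/
theorem gap_monotone {Ω : Type*} [MeasureSpace Ω] [IsProbabilityMeasure (volume : Measure Ω)]
    (X : Ω → ℝ) (hX : Integrable X) (hX0 : ∀ ω, 0 ≤ X ω) :
    MonotoneOn
      (fun ρ : ℝ => Real.log (1 + ρ * ∫ ω, X ω) - ∫ ω, Real.log (1 + ρ * X ω))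
      (Set.Ici 0) := by
  intro a ha b hb hab
  have hia := integrable_log_one_add_mul hX (ae_of_all _ hX0) ha
  have hib := integrable_log_one_add_mul hX (ae_of_all _ hX0) hb
  have jensen := (concaveOn_log_one_add_mul_sub_log_one_add_mul ha hab).le_map_integral
    ((continuousOn_log_one_add_mul hb).sub (continuousOn_log_one_add_mul ha)) isClosed_Ici
    (ae_of_all _ hX0) hX (hib.sub hia)
  rw [integral_sub hib hia] at jensen
  simp only
  linarith
end

section
/- Let X be a random variable with Gamma(M,1) density f(x) = x^{M-1} e^{-x}/(M-1)! on (0,∞), M a positive integer. Then lim_{ρ→∞} [ln(1 + ρM) - E[ln(1 + ρX)]] = γ - (Σ_{k=1}^{M} 1/k - ln M) + 1/M. -/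
open Real MeasureTheory Filter

/- Since `log (1 + y) - log y = log (1 + y⁻¹)`, the quantity `log (1 + ρ x) - log (ρ x)` decreases
to `0` as `ρ → ∞` and is dominated for `ρ ≥ 1` by `log 2 + |log x|`. Dominated convergence thus
gives `E[log (1 + ρ X)] - log ρ → E[log X]` for every positive `X` with integrable logarithm, while
`log (1 + ρ M) - log ρ → log M`. For the Gamma law, `E[log X] = Γ'(M) / Γ(M) = -γ + H_{M-1}`, read
off from the derivative of Euler's integral at `M`, and `H_{M-1} = H_M - 1/M`. -/

lemma log_one_add_sub_log_eq {y : ℝ} (hy : 0 < y) : log (1 + y) - log y = log (1 + y⁻¹) := by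
  rw [← log_div (by positivity) hy.ne', add_div, div_self hy.ne', one_div, add_comm]

lemma log_one_add_sub_log_antitoneOn : AntitoneOn (fun y => log (1 + y) - log y) (Set.Ioi 0) := by
  intro x (hx : 0 < x) y (hy : 0 < y) hxy
  simp only [log_one_add_sub_log_eq hx, log_one_add_sub_log_eq hy]
  gcongr

lemma log_one_add_sub_log_le {y : ℝ} (hy : 0 < y) : log (1 + y) - log y ≤ log 2 + |log y| := by
  rcases le_total y 1 with hy1 | hy1
  · have : log (1 + y) ≤ log 2 := log_le_log (by positivity) (by linarith)
    linarith [neg_abs_le (log y)]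
  · have : log (1 + y⁻¹) ≤ log 2 :=
      log_le_log (by positivity) (by linarith [inv_le_one_of_one_le₀ hy1])
    rw [log_one_add_sub_log_eq hy]
    linarith [abs_nonneg (log y)]

lemma tendsto_log_one_add_sub_log_atTop :
    Tendsto (fun y => log (1 + y) - log y) atTop (nhds 0) := by
  have h : Tendsto (fun y : ℝ => log (1 + y⁻¹)) atTop (nhds (log (1 + 0))) :=
    ((continuousAt_log (by norm_num)).tendsto).comp (tendsto_inv_atTop_zero.const_add 1)
  rw [add_zero, log_one] at h
  exact h.congr' (eventually_gt_atTop 0 |>.mono fun y hy => (log_one_add_sub_log_eq hy).symm)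

section LogMoment

variable {μ : Measure ℝ} {f : ℝ → ℝ}

lemma norm_log_one_add_mul_sub_log_mul_le {ρ x : ℝ} (hρ : 1 ≤ ρ) (hx : 0 < x) :
    ‖(log (1 + ρ * x) - log (ρ * x)) * f x‖ ≤ log 2 * ‖f x‖ + ‖log x * f x‖ := by
  have hρx : x ≤ ρ * x := le_mul_of_one_le_left hx.le hρ
  have hnonneg : 0 ≤ log (1 + ρ * x) - log (ρ * x) := by
    rw [log_one_add_sub_log_eq (by positivity)]
    exact log_nonneg (by simp; positivity)
  calc ‖(log (1 + ρ * x) - log (ρ * x)) * f x‖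
      = (log (1 + ρ * x) - log (ρ * x)) * ‖f x‖ := by rw [norm_mul, norm_of_nonneg hnonneg]
    _ ≤ (log (1 + x) - log x) * ‖f x‖ := mul_le_mul_of_nonneg_right
        (log_one_add_sub_log_antitoneOn hx (by positivity : 0 < ρ * x) hρx) (norm_nonneg _)
    _ ≤ (log 2 + |log x|) * ‖f x‖ := by gcongr; exact log_one_add_sub_log_le hx
    _ = log 2 * ‖f x‖ + ‖log x * f x‖ := by rw [norm_mul, norm_eq_abs (log x)]; ring

lemma integrable_log_one_add_mul_sub_log_mul (hpos : ∀ᵐ x ∂μ, 0 < x) (hf : Integrable f μ)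
    (hlog : Integrable (fun x => log x * f x) μ) {ρ : ℝ} (hρ : 1 ≤ ρ) :
    Integrable (fun x => (log (1 + ρ * x) - log (ρ * x)) * f x) μ := by
  refine ((hf.norm.const_mul (log 2)).add hlog.norm).mono' ?_ ?_
  · have : Measurable fun x => log (1 + ρ * x) - log (ρ * x) := by fun_prop
    exact this.aestronglyMeasurable.mul hf.aestronglyMeasurable
  · filter_upwards [hpos] with x hx using norm_log_one_add_mul_sub_log_mul_le hρ hx

lemma tendsto_integral_log_one_add_mul_sub_log_mul (hpos : ∀ᵐ x ∂μ, 0 < x) (hf : Integrable f μ)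
    (hlog : Integrable (fun x => log x * f x) μ) :
    Tendsto (fun ρ => ∫ x, (log (1 + ρ * x) - log (ρ * x)) * f x ∂μ) atTop (nhds 0) := by
  have h := tendsto_integral_filter_of_dominated_convergence (μ := μ) (l := atTop)
    (F := fun ρ x => (log (1 + ρ * x) - log (ρ * x)) * f x) (f := fun _ => 0)
    (fun x => log 2 * ‖f x‖ + ‖log x * f x‖)
    ((eventually_ge_atTop 1).mono fun ρ hρ =>
      (integrable_log_one_add_mul_sub_log_mul hpos hf hlog hρ).aestronglyMeasurable)
    ((eventually_ge_atTop 1).mono fun ρ hρ => by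
      filter_upwards [hpos] with x hx using norm_log_one_add_mul_sub_log_mul_le hρ hx)
    ((hf.norm.const_mul (log 2)).add hlog.norm)
    (by
      filter_upwards [hpos] with x hx
      simpa using (tendsto_log_one_add_sub_log_atTop.comp
        (tendsto_id.atTop_mul_const hx)).mul_const (f x))
  simpa using h

theorem tendsto_integral_log_one_add_mul_mul_sub_log_mul_integral (hpos : ∀ᵐ x ∂μ, 0 < x)
    (hf : Integrable f μ) (hlog : Integrable (fun x => log x * f x) μ) :
    Tendsto (fun ρ => ∫ x, log (1 + ρ * x) * f x ∂μ - log ρ * ∫ x, f x ∂μ) atTop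
      (nhds (∫ x, log x * f x ∂μ)) := by
  have h := (tendsto_integral_log_one_add_mul_sub_log_mul hpos hf hlog).add_const
    (∫ x, log x * f x ∂μ)
  rw [zero_add] at h
  refine h.congr' ((eventually_ge_atTop 1).mono fun ρ hρ => ?_)
  have hdev := integrable_log_one_add_mul_sub_log_mul hpos hf hlog hρ
  have hsplit : (fun x => log (1 + ρ * x) * f x) =ᵐ[μ]
      fun x => (log (1 + ρ * x) - log (ρ * x)) * f x + log x * f x + log ρ * f x := by
    filter_upwards [hpos] with x hx
    rw [log_mul (by positivity) hx.ne']
    ring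
  dsimp only
  rw [integral_congr_ae hsplit, integral_add (by exact hdev.add hlog) (hf.const_mul _),
    integral_add hdev hlog, integral_const_mul]
  ring

end LogMoment

lemma integrableOn_pow_mul_exp_neg (n : ℕ) :
    IntegrableOn (fun x : ℝ => x ^ n * exp (-x)) (Set.Ioi 0) := by
  refine (GammaIntegral_convergent (s := n + 1) (by positivity)).congr_fun
    (fun x _ => ?_) measurableSet_Ioi
  simp [mul_comm]

lemma integral_pow_mul_exp_neg (n : ℕ) :
    ∫ x in Set.Ioi (0 : ℝ), x ^ n * exp (-x) = n.factorial := by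
  rw [← Gamma_nat_eq_factorial, Gamma_eq_integral (by positivity)]
  refine setIntegral_congr_fun measurableSet_Ioi (fun x _ => ?_)
  simp [mul_comm]

lemma ofReal_log_mul_pow_mul_exp_neg (n : ℕ) (t : ℝ) :
    (t : ℂ) ^ ((n + 1 : ℂ) - 1) * (log t * exp (-t)) =
      ((log t * (t ^ n * exp (-t)) : ℝ) : ℂ) := by
  rw [add_sub_cancel_right, Complex.cpow_natCast]
  push_cast
  ring

lemma integrableOn_log_mul_pow_mul_exp_neg (n : ℕ) :
    IntegrableOn (fun x : ℝ => log x * (x ^ n * exp (-x))) (Set.Ioi 0) := by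
  have hexp : Continuous fun t : ℝ => (exp (-t) : ℂ) := by fun_prop
  have h : MellinConvergent (fun t : ℝ => log t • (exp (-t) : ℂ)) (n + 1) :=
    (mellin_hasDerivAt_of_isBigO_rpow (a := n + 2) (b := 0)
      (hexp.continuousOn.locallyIntegrableOn measurableSet_Ioi)
      (by
        rw [← Asymptotics.isBigO_norm_left]
        simp_rw [Complex.norm_real, Asymptotics.isBigO_norm_left]
        simpa only [neg_one_mul] using (isLittleO_exp_neg_mul_rpow_atTop zero_lt_one _).isBigO)
      (by simp)
      (by
        simp_rw [neg_zero, rpow_zero]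
        exact Asymptotics.isBigO_const_of_tendsto
          (by simpa using (hexp.tendsto 0).mono_left nhdsWithin_le_nhds) one_ne_zero)
      (by simp; positivity)).1
  refine IntegrableOn.congr_fun (Integrable.re h) (fun t _ => ?_) measurableSet_Ioi
  simp only [smul_eq_mul, Complex.real_smul, ofReal_log_mul_pow_mul_exp_neg,
    RCLike.re_to_complex, Complex.ofReal_re]

lemma integral_log_mul_pow_mul_exp_neg (n : ℕ) :
    ∫ x in Set.Ioi (0 : ℝ), log x * (x ^ n * exp (-x)) =
      n.factorial * (-eulerMascheroniConstant + harmonic n) := by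
  have hΓ : Complex.GammaIntegral =ᶠ[nhds (n + 1 : ℂ)] Complex.Gamma := by
    filter_upwards [(Complex.continuous_re.isOpen_preimage _ isOpen_Ioi).mem_nhds
      (by simp; positivity : (n + 1 : ℂ) ∈ Complex.re ⁻¹' Set.Ioi 0)] with s hs
    exact (Complex.Gamma_eq_integral hs).symm
  have h := (Complex.hasDerivAt_GammaIntegral (s := n + 1) (by simp; positivity)).unique
    ((Complex.hasDerivAt_Gamma_nat n).congr_of_eventuallyEq hΓ)
  rw [setIntegral_congr_fun measurableSet_Ioi
    (fun t _ => ofReal_log_mul_pow_mul_exp_neg n t)] at h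
  exact_mod_cast h

lemma integral_pow_mul_exp_neg_div_factorial (n : ℕ) :
    ∫ x in Set.Ioi (0 : ℝ), x ^ n * exp (-x) / n.factorial = 1 := by
  rw [integral_div, integral_pow_mul_exp_neg, div_self (by positivity)]

lemma integral_log_mul_pow_mul_exp_neg_div_factorial (n : ℕ) :
    ∫ x in Set.Ioi (0 : ℝ), log x * (x ^ n * exp (-x) / n.factorial) =
      -eulerMascheroniConstant + harmonic n := by
  simp_rw [mul_div_assoc']
  rw [integral_div, integral_log_mul_pow_mul_exp_neg, mul_div_cancel_left₀ _ (by positivity)]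

lemma sum_Icc_one_div_eq_harmonic_add (n : ℕ) :
    ∑ k ∈ Finset.Icc 1 (n + 1), (1 : ℝ) / k = harmonic n + 1 / (n + 1) := by
  rw [Finset.sum_Icc_succ_top (by omega), harmonic_eq_sum_Icc]
  push_cast
  simp [one_div]

/-- For `X` with Gamma(M,1) density `x^(M-1) e^(-x)/(M-1)!` on `(0,∞)`, the gap
`ln(1 + ρM) - E[ln(1 + ρX)]` tends, as `ρ → ∞`, to
`γ - (∑_{k=1}^M 1/k - ln M) + 1/M`. -/
theorem gamma_gap_limit (M : ℕ) (hM : 0 < M) :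
    Tendsto
      (fun ρ : ℝ => Real.log (1 + ρ * M) -
        ∫ x in Set.Ioi (0 : ℝ),
          Real.log (1 + ρ * x) * (x ^ (M - 1) * Real.exp (-x) / (Nat.factorial (M - 1))))
      atTop
      (nhds (Real.eulerMascheroniConstant -
        ((∑ k ∈ Finset.Icc 1 M, (1 : ℝ) / k) - Real.log M) + 1 / M)) := by
  obtain ⟨n, rfl⟩ : ∃ n, M = n + 1 := ⟨M - 1, by omega⟩
  have hE := tendsto_integral_log_one_add_mul_mul_sub_log_mul_integral
    (μ := volume.restrict (Set.Ioi 0)) (f := fun x => x ^ n * exp (-x) / n.factorial)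
    (ae_restrict_mem measurableSet_Ioi) ((integrableOn_pow_mul_exp_neg n).div_const _)
    (by simpa only [mul_div_assoc] using (integrableOn_log_mul_pow_mul_exp_neg n).div_const _)
  rw [integral_pow_mul_exp_neg_div_factorial, integral_log_mul_pow_mul_exp_neg_div_factorial] at hE
  have hlogM := (tendsto_log_one_add_sub_log_atTop.comp
    (tendsto_id.atTop_mul_const (by positivity : (0 : ℝ) < n + 1))).add_const (log (n + 1))
  rw [Nat.add_sub_cancel, sum_Icc_one_div_eq_harmonic_add]
  push_cast
  rw [show eulerMascheroniConstant - (harmonic n + 1 / (n + 1) - log (n + 1)) + 1 / (n + 1) =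
    0 + log (n + 1) - (-eulerMascheroniConstant + harmonic n) by ring]
  refine (hlogM.sub hE).congr' ?_
  filter_upwards [eventually_gt_atTop 0] with ρ hρ
  simp only [Function.comp_apply, id, log_mul hρ.ne' (by positivity : (n : ℝ) + 1 ≠ 0)]
  ring
end

section
/- Let X be a random variable on (0,∞) with density f(x) = Σ_{i=1}^{p} e^{-x/λ_i}/(λ_i ∏_{l≠i}(1 - λ_l/λ_i)) for pairwise distinct positive λ_i. Then for all ρ > 0, 0 ≤ ln(1 + ρ Σ_i λ_i) - E[ln(1 + ρX)] ≤ γ - (Σ_{i=1}^{p} ln λ_i / ∏_{l≠i}(1 - λ_l/λ_i) - ln(Σ_{i=1}^{p} λ_i)). -/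
/-!
Write `m = ∑ᵢ λᵢ`. The density is the mixture `∑ᵢ aᵢ e^{-x/λᵢ}/λᵢ` of exponential densities with
weights `aᵢ = 1/∏_{l≠i}(1 - λ_l/λᵢ) = λᵢ^{p-1}/∏_{l≠i}(λᵢ - λ_l)`, so Lagrange interpolation of
`X^k` gives `∑ aᵢ = 1` and `∑ aᵢ λᵢ = m`, and `Γ'(1) = -γ` gives
`E[ln X] = ∑ aᵢ ln λᵢ - γ`. Although some `aᵢ` are negative, the density is nonnegative: adding
a rate `λⱼ` turns a density `g` into the solution of `f' = (g - f)/λⱼ`, `f(0) = 0`.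
Both bounds are Jensen's inequality in tangent-line form at the mean `m`: `ln(1 + ρx)` is concave,
so `E[ln(1 + ρX)] ≤ ln(1 + ρm)`, and `ln(1 + ρx) - ln x = ln(ρ + 1/x)` is convex, so
`E[ln(1 + ρX)] ≥ ln(1 + ρm) - ln m + E[ln X]`.
-/

open Real MeasureTheory Finset

namespace Lagrange

open Polynomial

variable {F ι : Type*} [Field F] [DecidableEq ι] {s : Finset ι} {v : ι → F}

theorem sum_pow_div_prod_sub_of_lt (hvs : Set.InjOn v s) {k : ℕ} (hk : k < #s) :
    ∑ i ∈ s, v i ^ k / ∏ j ∈ s.erase i, (v i - v j) = if k = #s - 1 then 1 else 0 := by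
  have h := coeff_eq_sum hvs ((degree_X_pow_le k).trans_lt (by exact_mod_cast hk))
  simp only [eval_pow, eval_X, coeff_X_pow] at h
  rw [← h]
  simp only [eq_comm]

theorem sum_pow_card_div_prod_sub (hvs : Set.InjOn v s) (hs : s.Nonempty) :
    ∑ i ∈ s, v i ^ #s / ∏ j ∈ s.erase i, (v i - v j) = ∑ i ∈ s, v i := by
  have hdeg : (X ^ #s - nodal s v).degree < (#s : WithBot ℕ) := by
    rw [← degree_X_pow (R := F) #s]
    exact degree_sub_lt_left (by rw [degree_X_pow, degree_nodal]) (monic_X_pow _).ne_zero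
      (by rw [(monic_X_pow _).leadingCoeff, nodal_monic.leadingCoeff])
  have hcoeff : (X ^ #s - nodal s v).coeff (#s - 1) = ∑ i ∈ s, v i := by
    rw [coeff_sub, coeff_X_pow, if_neg (by have := hs.card_pos; omega), nodal_eq,
      prod_X_sub_C_coeff_card_pred s v hs.card_pos, zero_sub, neg_neg]
  rw [← hcoeff, coeff_eq_sum hvs hdeg]
  refine sum_congr rfl fun i hi => ?_
  rw [eval_sub, eval_nodal_at_node hi, eval_pow, eval_X, sub_zero]

end Lagrange

section HypoexpWeight

open Lagrange

variable {F ι : Type*} [Field F] [DecidableEq ι]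

def hypoexpWeight (s : Finset ι) (v : ι → F) (i : ι) : F :=
  (∏ l ∈ s.erase i, (1 - v l / v i))⁻¹

variable {s : Finset ι} {v : ι → F}

theorem hypoexpWeight_eq_pow_div_prod_sub {i : ι} (hi : i ∈ s) (hv : v i ≠ 0) :
    hypoexpWeight s v i = v i ^ (#s - 1) / ∏ l ∈ s.erase i, (v i - v l) := by
  have h : ∀ l ∈ s.erase i, 1 - v l / v i = (v i - v l) / v i := fun l _ => one_sub_div hv
  rw [hypoexpWeight, prod_congr rfl h, prod_div_distrib, prod_const, card_erase_of_mem hi,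
    inv_div]

theorem hypoexpWeight_insert {j i : ι} (hj : j ∉ s) (hij : i ≠ j) :
    hypoexpWeight (insert j s) v i = hypoexpWeight s v i * (1 - v j / v i)⁻¹ := by
  rw [hypoexpWeight, hypoexpWeight, erase_insert_of_ne hij.symm,
    prod_insert fun h => hj (mem_of_mem_erase h), mul_inv, mul_comm]

variable (hv : ∀ i ∈ s, v i ≠ 0) (hvs : Set.InjOn v s)
include hv hvs

theorem sum_hypoexpWeight (hs : s.Nonempty) : ∑ i ∈ s, hypoexpWeight s v i = 1 := by
  rw [sum_congr rfl fun i hi => hypoexpWeight_eq_pow_div_prod_sub hi (hv i hi),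
    sum_pow_div_prod_sub_of_lt hvs (by have := hs.card_pos; omega), if_pos rfl]

theorem sum_hypoexpWeight_mul (hs : s.Nonempty) :
    ∑ i ∈ s, hypoexpWeight s v i * v i = ∑ i ∈ s, v i := by
  have h : ∀ i ∈ s, hypoexpWeight s v i * v i = v i ^ #s / ∏ l ∈ s.erase i, (v i - v l) :=
    fun i hi => by
      rw [hypoexpWeight_eq_pow_div_prod_sub hi (hv i hi), div_mul_eq_mul_div, ← pow_succ,
        Nat.sub_add_cancel hs.card_pos]
  rw [sum_congr rfl h, sum_pow_card_div_prod_sub hvs hs]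

theorem sum_hypoexpWeight_div (hs : 2 ≤ #s) : ∑ i ∈ s, hypoexpWeight s v i / v i = 0 := by
  have h : ∀ i ∈ s, hypoexpWeight s v i / v i = v i ^ (#s - 2) / ∏ l ∈ s.erase i, (v i - v l) :=
    fun i hi => by
      rw [hypoexpWeight_eq_pow_div_prod_sub hi (hv i hi),
        show #s - 1 = #s - 2 + 1 by omega, pow_succ]
      field_simp [hv i hi]
  rw [sum_congr rfl h, sum_pow_div_prod_sub_of_lt hvs (by omega), if_neg (by omega)]

end HypoexpWeight

section StandardExponential

theorem integral_mul_exp_neg_Ioi_zero : ∫ t in Set.Ioi 0, t * exp (-t) = 1 := by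
  have h := Gamma_eq_integral two_pos
  norm_num [Gamma_two] at h
  rw [h]
  exact setIntegral_congr_fun measurableSet_Ioi fun t _ => mul_comm _ _

theorem integral_log_mul_exp_neg_Ioi_zero :
    ∫ t in Set.Ioi 0, log t * exp (-t) = -eulerMascheroniConstant := by
  have hΓ : HasDerivAt Complex.GammaIntegral (-eulerMascheroniConstant : ℂ) 1 := by
    refine Complex.hasDerivAt_Gamma_one.congr_of_eventuallyEq ?_
    filter_upwards [(isOpen_lt continuous_const Complex.continuous_re).mem_nhds
      (show (0 : ℝ) < (1 : ℂ).re by norm_num)] with s hs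
    exact (Complex.Gamma_eq_integral hs).symm
  have h := (Complex.hasDerivAt_GammaIntegral (by norm_num)).unique hΓ
  simp only [sub_self, Complex.cpow_zero, one_mul] at h
  have hc : ∫ t in Set.Ioi 0, ((log t * exp (-t) : ℝ) : ℂ) = -eulerMascheroniConstant := by
    simpa only [Complex.ofReal_mul] using h
  exact_mod_cast integral_complex_ofReal.symm.trans hc

theorem integrableOn_exp_neg_Ioi_zero : IntegrableOn (fun t => exp (-t)) (Set.Ioi 0) := by
  simpa using exp_neg_integrableOn_Ioi 0 one_pos

theorem integrableOn_mul_exp_neg_Ioi_zero : IntegrableOn (fun t => t * exp (-t)) (Set.Ioi 0) :=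
  .of_integral_ne_zero (by rw [integral_mul_exp_neg_Ioi_zero]; exact one_ne_zero)

theorem integrableOn_log_mul_exp_neg_Ioi_zero :
    IntegrableOn (fun t => log t * exp (-t)) (Set.Ioi 0) :=
  .of_integral_ne_zero (by
    rw [integral_log_mul_exp_neg_Ioi_zero, neg_ne_zero]
    exact (one_half_pos.trans one_half_lt_eulerMascheroniConstant).ne')

end StandardExponential

section ExpDensity

noncomputable def expDensity (a x : ℝ) : ℝ := exp (-x / a) / a

theorem expDensity_zero (a : ℝ) : expDensity a 0 = a⁻¹ := by
  simp [expDensity]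

theorem hasDerivAt_expDensity (a x : ℝ) : HasDerivAt (expDensity a) (-expDensity a x / a) x := by
  refine (((hasDerivAt_neg x).div_const a).exp.div_const a).congr_deriv ?_
  unfold expDensity
  ring

theorem expDensity_nonneg {a : ℝ} (ha : 0 ≤ a) (x : ℝ) : 0 ≤ expDensity a x := by
  unfold expDensity; positivity

theorem mul_expDensity_mul_left {a : ℝ} (ha : a ≠ 0) (g : ℝ → ℝ) (t : ℝ) :
    g (a * t) * expDensity a (a * t) = a⁻¹ * (g (a * t) * exp (-t)) := by
  rw [expDensity, neg_div, mul_div_cancel_left₀ t ha]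
  ring

variable {a : ℝ} (ha : 0 < a)
include ha

theorem setIntegral_mul_expDensity (g : ℝ → ℝ) :
    ∫ x in Set.Ioi 0, g x * expDensity a x = ∫ t in Set.Ioi 0, g (a * t) * exp (-t) := by
  have h := integral_comp_mul_left_Ioi (fun x => g x * expDensity a x) 0 ha
  simp only [mul_expDensity_mul_left ha.ne', integral_const_mul, mul_zero, smul_eq_mul] at h
  exact (mul_left_cancel₀ (inv_ne_zero ha.ne') h).symm

theorem integrableOn_mul_expDensity_iff (g : ℝ → ℝ) :
    IntegrableOn (fun x => g x * expDensity a x) (Set.Ioi 0) ↔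
      IntegrableOn (fun t => g (a * t) * exp (-t)) (Set.Ioi 0) := by
  rw [← mul_zero a, ← integrableOn_Ioi_comp_mul_left_iff _ 0 ha]
  simp only [mul_expDensity_mul_left ha.ne', mul_zero]
  exact integrable_const_mul_iff (isUnit_iff_ne_zero.mpr (inv_ne_zero ha.ne')) _

theorem integrableOn_expDensity : IntegrableOn (expDensity a) (Set.Ioi 0) := by
  simpa only [one_mul] using (integrableOn_mul_expDensity_iff ha fun _ => 1).mpr
    (by simpa only [one_mul] using integrableOn_exp_neg_Ioi_zero)

theorem integral_expDensity : ∫ x in Set.Ioi 0, expDensity a x = 1 := by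
  simpa only [one_mul] using (setIntegral_mul_expDensity ha fun _ => 1).trans
    (by simpa only [one_mul] using integral_exp_neg_Ioi_zero)

theorem integrableOn_mul_expDensity : IntegrableOn (fun x => x * expDensity a x) (Set.Ioi 0) :=
  (integrableOn_mul_expDensity_iff ha _).mpr <| by
    simp_rw [mul_assoc]
    exact integrableOn_mul_exp_neg_Ioi_zero.const_mul a

theorem integral_mul_expDensity : ∫ x in Set.Ioi 0, x * expDensity a x = a := by
  simp only [setIntegral_mul_expDensity ha, mul_assoc, integral_const_mul,
    integral_mul_exp_neg_Ioi_zero, mul_one]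

theorem log_mul_mul_exp_neg (t : ℝ) (ht : t ∈ Set.Ioi 0) :
    log (a * t) * exp (-t) = log a * exp (-t) + log t * exp (-t) := by
  rw [log_mul ha.ne' (ne_of_gt ht), add_mul]

theorem integrableOn_log_mul_expDensity :
    IntegrableOn (fun x => log x * expDensity a x) (Set.Ioi 0) :=
  (integrableOn_mul_expDensity_iff ha _).mpr <|
    IntegrableOn.congr_fun ((integrableOn_exp_neg_Ioi_zero.const_mul (log a)).add
      integrableOn_log_mul_exp_neg_Ioi_zero)
      (fun t ht => (log_mul_mul_exp_neg ha t ht).symm) measurableSet_Ioi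

theorem integral_log_mul_expDensity :
    ∫ x in Set.Ioi 0, log x * expDensity a x = log a - eulerMascheroniConstant := by
  rw [setIntegral_mul_expDensity ha, setIntegral_congr_fun measurableSet_Ioi
    (log_mul_mul_exp_neg ha), integral_add (integrableOn_exp_neg_Ioi_zero.const_mul _)
    integrableOn_log_mul_exp_neg_Ioi_zero, integral_const_mul, integral_exp_neg_Ioi_zero,
    integral_log_mul_exp_neg_Ioi_zero]
  ring

theorem integrableOn_log_one_add_mul_mul_expDensity {ρ : ℝ} (hρ : 0 ≤ ρ) :
    IntegrableOn (fun x => log (1 + ρ * x) * expDensity a x) (Set.Ioi 0) := by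
  refine ((integrableOn_mul_expDensity ha).const_mul ρ).mono'
    (by unfold expDensity; fun_prop : Measurable _).aestronglyMeasurable ?_
  filter_upwards [ae_restrict_mem measurableSet_Ioi] with x hx
  have hx : 0 < x := hx
  have h1 : 0 ≤ log (1 + ρ * x) := log_nonneg (by nlinarith)
  have h2 : log (1 + ρ * x) ≤ ρ * x := by
    linarith [log_le_sub_one_of_pos (show 0 < 1 + ρ * x by nlinarith)]
  rw [norm_mul, norm_of_nonneg h1, norm_of_nonneg (expDensity_nonneg ha.le x), ← mul_assoc]
  exact mul_le_mul_of_nonneg_right h2 (expDensity_nonneg ha.le x)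

end ExpDensity

theorem nonneg_of_hasDerivAt_eq_sub_div {f g : ℝ → ℝ} {c : ℝ} (hc : 0 < c)
    (hf : ∀ x, HasDerivAt f ((g x - f x) / c) x) (hg : ∀ x, 0 ≤ x → 0 ≤ g x) (h0 : 0 ≤ f 0)
    {x : ℝ} (hx : 0 ≤ x) : 0 ≤ f x := by
  -- `exp (y / c) * f y` has derivative `exp (y / c) * g y / c ≥ 0`.
  have hderiv : ∀ y, HasDerivAt (fun y => exp (y / c) * f y) (exp (y / c) * g y / c) y :=
    fun y => (((hasDerivAt_id y).div_const c).exp.mul (hf y)).congr_deriv (by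
      simp only [id]; field_simp; ring)
  have hmono : MonotoneOn (fun y => exp (y / c) * f y) (Set.Ici 0) :=
    monotoneOn_of_hasDerivWithinAt_nonneg (convex_Ici 0)
      (fun y _ => (hderiv y).continuousAt.continuousWithinAt)
      (fun y _ => (hderiv y).hasDerivWithinAt)
      (fun y hy => by
        rw [interior_Ici] at hy
        have := hg y (le_of_lt hy)
        positivity)
  have h := hmono Set.self_mem_Ici hx hx
  simp only [zero_div, exp_zero, one_mul] at h
  exact (mul_nonneg_iff_of_pos_left (exp_pos _)).mp (h0.trans h)

section HypoexpDensity

variable {ι : Type*} [DecidableEq ι]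

noncomputable def hypoexpDensity (s : Finset ι) (v : ι → ℝ) (x : ℝ) : ℝ :=
  ∑ i ∈ s, exp (-x / v i) / (v i * ∏ l ∈ s.erase i, (1 - v l / v i))

variable {s : Finset ι} {v : ι → ℝ}

theorem hypoexpDensity_eq_sum (x : ℝ) :
    hypoexpDensity s v x = ∑ i ∈ s, hypoexpWeight s v i * expDensity (v i) x :=
  sum_congr rfl fun i _ => by rw [hypoexpWeight, expDensity]; ring

theorem hypoexpDensity_zero : hypoexpDensity s v 0 = ∑ i ∈ s, hypoexpWeight s v i / v i := by
  simp only [hypoexpDensity_eq_sum, expDensity_zero, div_eq_mul_inv]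

theorem hasDerivAt_hypoexpDensity (x : ℝ) :
    HasDerivAt (hypoexpDensity s v)
      (∑ i ∈ s, hypoexpWeight s v i * (-expDensity (v i) x / v i)) x := by
  rw [funext hypoexpDensity_eq_sum]
  exact HasDerivAt.fun_sum fun i _ => (hasDerivAt_expDensity (v i) x).const_mul _

theorem hasDerivAt_hypoexpDensity_insert {j : ι} (hj : j ∉ s) (hv : ∀ i ∈ insert j s, v i ≠ 0)
    (hvs : Set.InjOn v ↑(insert j s)) (x : ℝ) :
    HasDerivAt (hypoexpDensity (insert j s) v)
      ((hypoexpDensity s v x - hypoexpDensity (insert j s) v x) / v j) x := by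
  refine (hasDerivAt_hypoexpDensity x).congr_deriv ?_
  have hvj := hv j (mem_insert_self j s)
  have hterm : ∀ i ∈ s, hypoexpWeight (insert j s) v i * (-expDensity (v i) x / v i) =
      (hypoexpWeight s v i * expDensity (v i) x -
        hypoexpWeight (insert j s) v i * expDensity (v i) x) / v j := fun i hi => by
    have hij : i ≠ j := fun h => hj (h ▸ hi)
    have hvi := hv i (mem_insert_of_mem hi)
    have hsub : v i - v j ≠ 0 := sub_ne_zero.mpr (hvs.ne (by simp [hi]) (by simp) hij)
    rw [hypoexpWeight_insert hj hij, one_sub_div hvi]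
    field_simp
    ring
  rw [sum_insert hj, sum_congr rfl hterm, ← sum_div, hypoexpDensity_eq_sum, hypoexpDensity_eq_sum,
    sum_insert hj, sum_sub_distrib]
  field_simp
  ring

theorem hypoexpDensity_nonneg (hv : ∀ i ∈ s, 0 < v i) (hvs : Set.InjOn v s) (hs : s.Nonempty)
    {x : ℝ} (hx : 0 ≤ x) : 0 ≤ hypoexpDensity s v x := by
  induction hs using Nonempty.cons_induction generalizing x with
  | singleton j =>
    have := hv j (mem_singleton_self j)
    simp only [hypoexpDensity, sum_singleton, erase_singleton, prod_empty, mul_one]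
    positivity
  | cons j t hj ht ih =>
    rw [cons_eq_insert] at hv hvs ⊢
    have hv' : ∀ i ∈ t, 0 < v i := fun i hi => hv i (mem_insert_of_mem hi)
    refine nonneg_of_hasDerivAt_eq_sub_div (hv j (mem_insert_self j t))
      (hasDerivAt_hypoexpDensity_insert hj (fun i hi => (hv i hi).ne') hvs)
      (fun y hy => ih hv' (hvs.mono (subset_insert j t)) hy) (le_of_eq ?_) hx
    rw [hypoexpDensity_zero, sum_hypoexpWeight_div (fun i hi => (hv i hi).ne') hvs
      (by rw [card_insert_of_notMem hj]; have := ht.card_pos; omega)]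

end HypoexpDensity

structure IsDensityWithMean (μ : Measure ℝ) (f : ℝ → ℝ) (m : ℝ) : Prop where
  nonneg : ∀ᵐ x ∂μ, 0 ≤ f x
  integrable : Integrable f μ
  integrable_mul : Integrable (fun x => x * f x) μ
  integral_eq_one : ∫ x, f x ∂μ = 1
  integral_mul_eq : ∫ x, x * f x ∂μ = m

namespace IsDensityWithMean

variable {μ : Measure ℝ} {f : ℝ → ℝ} {m : ℝ} (hf : IsDensityWithMean μ f m)
include hf

theorem integrable_affine_mul (a c : ℝ) : Integrable (fun x => (a + c * (x - m)) * f x) μ :=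
  ((hf.integrable.const_mul (a - c * m)).add (hf.integrable_mul.const_mul c)).congr
    (.of_forall fun x => by simp only [Pi.add_apply]; ring)

theorem integral_affine_mul (a c : ℝ) : ∫ x, (a + c * (x - m)) * f x ∂μ = a := by
  calc ∫ x, (a + c * (x - m)) * f x ∂μ = ∫ x, ((a - c * m) * f x + c * (x * f x)) ∂μ := by
        congr with x; ring
    _ = a := by
      rw [integral_add (hf.integrable.const_mul _) (hf.integrable_mul.const_mul c),
        integral_const_mul, integral_const_mul, hf.integral_eq_one, hf.integral_mul_eq]
      ring

theorem integral_mul_le_of_le_tangent {φ : ℝ → ℝ} {c : ℝ}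
    (hφ : Integrable (fun x => φ x * f x) μ) (htan : ∀ᵐ x ∂μ, φ x ≤ φ m + c * (x - m)) :
    ∫ x, φ x * f x ∂μ ≤ φ m := by
  rw [← hf.integral_affine_mul (φ m) c]
  refine integral_mono_ae hφ (hf.integrable_affine_mul _ _) ?_
  filter_upwards [htan, hf.nonneg] with x hx hfx
  exact mul_le_mul_of_nonneg_right hx hfx

theorem le_integral_mul_of_tangent_le {φ : ℝ → ℝ} {c : ℝ}
    (hφ : Integrable (fun x => φ x * f x) μ) (htan : ∀ᵐ x ∂μ, φ m + c * (x - m) ≤ φ x) :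
    φ m ≤ ∫ x, φ x * f x ∂μ := by
  rw [← hf.integral_affine_mul (φ m) c]
  refine integral_mono_ae (hf.integrable_affine_mul _ _) hφ ?_
  filter_upwards [htan, hf.nonneg] with x hx hfx
  exact mul_le_mul_of_nonneg_right hx hfx

end IsDensityWithMean

section HypoexpMoments

variable {ι : Type*} [DecidableEq ι] {s : Finset ι} {v : ι → ℝ}

theorem integrableOn_mul_hypoexpDensity {g : ℝ → ℝ}
    (hg : ∀ i ∈ s, IntegrableOn (fun x => g x * expDensity (v i) x) (Set.Ioi 0)) :
    IntegrableOn (fun x => g x * hypoexpDensity s v x) (Set.Ioi 0) := by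
  simp_rw [hypoexpDensity_eq_sum, mul_sum, mul_left_comm (g _)]
  exact integrable_finsetSum _ fun i hi => (hg i hi).const_mul _

theorem setIntegral_mul_hypoexpDensity {g : ℝ → ℝ}
    (hg : ∀ i ∈ s, IntegrableOn (fun x => g x * expDensity (v i) x) (Set.Ioi 0)) :
    ∫ x in Set.Ioi 0, g x * hypoexpDensity s v x =
      ∑ i ∈ s, hypoexpWeight s v i * ∫ x in Set.Ioi 0, g x * expDensity (v i) x := by
  simp_rw [hypoexpDensity_eq_sum, mul_sum, mul_left_comm (g _)]
  rw [integral_finsetSum _ fun i hi => (hg i hi).const_mul _]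
  simp_rw [integral_const_mul]

variable (hv : ∀ i ∈ s, 0 < v i) (hvs : Set.InjOn v s)
include hv hvs

theorem integral_log_mul_hypoexpDensity (hs : s.Nonempty) :
    ∫ x in Set.Ioi 0, log x * hypoexpDensity s v x =
      ∑ i ∈ s, hypoexpWeight s v i * log (v i) - eulerMascheroniConstant := by
  have hv' : ∀ i ∈ s, v i ≠ 0 := fun i hi => (hv i hi).ne'
  rw [setIntegral_mul_hypoexpDensity fun i hi => integrableOn_log_mul_expDensity (hv i hi),
    sum_congr rfl fun i hi => by rw [integral_log_mul_expDensity (hv i hi)]]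
  simp_rw [mul_sub, sum_sub_distrib, ← sum_mul, sum_hypoexpWeight hv' hvs hs, one_mul]

theorem hypoexpDensity_isDensityWithMean (hs : s.Nonempty) :
    IsDensityWithMean (volume.restrict (Set.Ioi 0)) (hypoexpDensity s v) (∑ i ∈ s, v i) := by
  have hv' : ∀ i ∈ s, v i ≠ 0 := fun i hi => (hv i hi).ne'
  have hone : ∀ i ∈ s, IntegrableOn (fun x => 1 * expDensity (v i) x) (Set.Ioi 0) :=
    fun i hi => by simpa only [one_mul] using integrableOn_expDensity (hv i hi)
  refine ⟨(ae_restrict_iff' measurableSet_Ioi).2 (.of_forall fun x hx =>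
      hypoexpDensity_nonneg hv hvs hs (le_of_lt hx)),
    by simpa only [one_mul] using (integrableOn_mul_hypoexpDensity hone).integrable,
    integrableOn_mul_hypoexpDensity fun i hi => integrableOn_mul_expDensity (hv i hi), ?_, ?_⟩
  · have h := setIntegral_mul_hypoexpDensity hone
    simp only [one_mul] at h
    rw [h, sum_congr rfl fun i hi => by rw [integral_expDensity (hv i hi), mul_one],
      sum_hypoexpWeight hv' hvs hs]
  · rw [setIntegral_mul_hypoexpDensity fun i hi => integrableOn_mul_expDensity (hv i hi),
      sum_congr rfl fun i hi => by rw [integral_mul_expDensity (hv i hi)],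
      sum_hypoexpWeight_mul hv' hvs hs]

end HypoexpMoments

theorem log_one_add_mul_le_tangent {ρ x m : ℝ} (hρ : 0 ≤ ρ) (hx : 0 ≤ x) (hm : 0 ≤ m) :
    log (1 + ρ * x) ≤ log (1 + ρ * m) + ρ / (1 + ρ * m) * (x - m) := by
  have hx' : 0 < 1 + ρ * x := by positivity
  have hm' : 0 < 1 + ρ * m := by positivity
  have h := log_le_sub_one_of_pos (div_pos hx' hm')
  rw [log_div hx'.ne' hm'.ne'] at h
  have heq : (1 + ρ * x) / (1 + ρ * m) - 1 = ρ / (1 + ρ * m) * (x - m) := by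
    field_simp
    ring
  linarith

theorem tangent_le_log_one_add_mul_sub_log {ρ x m : ℝ} (hρ : 0 ≤ ρ) (hx : 0 < x) (hm : 0 < m) :
    log (1 + ρ * m) - log m + -(m * (1 + ρ * m))⁻¹ * (x - m) ≤ log (1 + ρ * x) - log x := by
  have hx' : 0 < 1 + ρ * x := by positivity
  have hm' : 0 < 1 + ρ * m := by positivity
  have h := log_le_sub_one_of_pos (show 0 < x * (1 + ρ * m) / (m * (1 + ρ * x)) by positivity)
  rw [log_div (by positivity) (by positivity), log_mul hx.ne' hm'.ne',
    log_mul hm.ne' hx'.ne'] at h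
  have hle : x * (1 + ρ * m) / (m * (1 + ρ * x)) - 1 ≤ (m * (1 + ρ * m))⁻¹ * (x - m) := by
    rw [div_sub_one (by positivity), inv_mul_eq_div,
      div_le_div_iff₀ (by positivity) (by positivity)]
    nlinarith [mul_nonneg (mul_nonneg hm.le hρ) (sq_nonneg (x - m))]
  linarith

/-- For `X` a hypoexponential random variable on `(0,∞)` with density
`f(x) = ∑ i, e^{-x/λᵢ}/(λᵢ ∏_{l≠i}(1 - λ_l/λᵢ))` for pairwise distinct positive `λᵢ`,
and any `ρ > 0`,
`0 ≤ ln(1 + ρ ∑ᵢ λᵢ) - E[ln(1 + ρX)]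
   ≤ γ - (∑ i, ln λᵢ/∏_{l≠i}(1 - λ_l/λᵢ) - ln(∑ᵢ λᵢ))`. -/
theorem hypoexponential_gap_bound (p : ℕ) (hp : 0 < p) (lam : Fin p → ℝ)
    (hpos : ∀ i, 0 < lam i) (hdist : Function.Injective lam) (ρ : ℝ) (hρ : 0 < ρ) :
    0 ≤ Real.log (1 + ρ * ∑ i, lam i) -
        ∫ x in Set.Ioi (0 : ℝ),
          Real.log (1 + ρ * x) *
            (∑ i, Real.exp (-x / lam i) /
              (lam i * ∏ l ∈ univ.erase i, (1 - lam l / lam i))) ∧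
      Real.log (1 + ρ * ∑ i, lam i) -
        (∫ x in Set.Ioi (0 : ℝ),
          Real.log (1 + ρ * x) *
            (∑ i, Real.exp (-x / lam i) /
              (lam i * ∏ l ∈ univ.erase i, (1 - lam l / lam i)))) ≤
        Real.eulerMascheroniConstant -
          ((∑ i, Real.log (lam i) / ∏ l ∈ univ.erase i, (1 - lam l / lam i)) -
            Real.log (∑ i, lam i)) := by
  have hs : (univ : Finset (Fin p)).Nonempty := univ_nonempty_iff.2 ⟨⟨0, hp⟩⟩
  have hpos' : ∀ i ∈ univ, 0 < lam i := fun i _ => hpos i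
  have hm : 0 < ∑ i, lam i := sum_pos hpos' hs
  have hf := hypoexpDensity_isDensityWithMean hpos' hdist.injOn hs
  have hJ := integrableOn_mul_hypoexpDensity (s := univ) fun i _ =>
    integrableOn_log_one_add_mul_mul_expDensity (hpos i) (ρ := ρ) hρ.le
  have hlog := integrableOn_mul_hypoexpDensity (s := univ) fun i _ =>
    integrableOn_log_mul_expDensity (hpos i)
  have hupper := hf.integral_mul_le_of_le_tangent hJ (ae_restrict_of_forall_mem measurableSet_Ioi
    fun x hx => log_one_add_mul_le_tangent hρ.le (le_of_lt hx) hm.le)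
  have hφ : IntegrableOn (fun x => (log (1 + ρ * x) - log x) * hypoexpDensity univ lam x)
      (Set.Ioi 0) := by
    simp_rw [sub_mul]
    exact hJ.sub hlog
  have hlower := hf.le_integral_mul_of_tangent_le (φ := fun x => log (1 + ρ * x) - log x) hφ
    (ae_restrict_of_forall_mem measurableSet_Ioi fun x hx =>
      tangent_le_log_one_add_mul_sub_log hρ.le hx hm)
  simp only [sub_mul] at hlower
  rw [integral_sub hJ hlog, integral_log_mul_hypoexpDensity hpos' hdist.injOn hs] at hlower
  have hweights : ∑ i, log (lam i) / ∏ l ∈ univ.erase i, (1 - lam l / lam i) =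
      ∑ i, hypoexpWeight univ lam i * log (lam i) := sum_congr rfl fun i _ => div_eq_inv_mul _ _
  rw [hweights]
  simp only [← hypoexpDensity.eq_1]
  exact ⟨by linarith, by linarith⟩
end
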